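/- Let n = 2m + 1 ≥ 3 be an odd integer and let I = ⟨x_1x_2, x_2x_3, …, x_{n−1}x_n, x_nx_1⟩ ⊂ K[x_1,…,x_n] be the edge ideal of the odd cycle C_n over a field K. Then v(I^k) = 2k − 1 for all k ≥ m = ⌊n/2⌋. -/

import Mathlib

open MvPolynomial

/-- A graded (homogeneous) ideal: one generated by homogeneous polynomials. -/
def IsHomogeneousIdeal {K : Type*} [Field K] {n : ℕ}
    (I : Ideal (MvPolynomial (Fin n) K)) : Prop :=
  ∃ G : Set (MvPolynomial (Fin n) K),
    (∀ f ∈ G, ∃ d, f.IsHomogeneous d) ∧ I = Ideal.span G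

/-- `Ass(I)`: the associated primes of `S/I`. -/
def Ass {K : Type*} [Field K] {n : ℕ} (I : Ideal (MvPolynomial (Fin n) K)) :
    Set (Ideal (MvPolynomial (Fin n) K)) :=
  associatedPrimes (MvPolynomial (Fin n) K) (MvPolynomial (Fin n) K ⧸ I)

/-- The local v-number `v_p(I)`. -/
noncomputable def vNumberAt {K : Type*} [Field K] {n : ℕ}
    (I p : Ideal (MvPolynomial (Fin n) K)) : ℕ :=
  sInf {d | ∃ f : MvPolynomial (Fin n) K, f.IsHomogeneous d ∧
    I.colon (Ideal.span {f}) = p}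

/-- The v-number `v(I)`. -/
noncomputable def vNumber {K : Type*} [Field K] {n : ℕ}
    (I : Ideal (MvPolynomial (Fin n) K)) : ℕ :=
  sInf {d | ∃ f : MvPolynomial (Fin n) K, ∃ p ∈ Ass I, f.IsHomogeneous d ∧
    I.colon (Ideal.span {f}) = p}

/-- `α(J)`: the least degree of a nonzero element of `J`. -/
noncomputable def alphaNum {K : Type*} [Field K] {n : ℕ}
    (J : Ideal (MvPolynomial (Fin n) K)) : ℕ :=
  sInf {d | ∃ f ∈ J, f ≠ 0 ∧ f.totalDegree = d}

/-- `c(I) = max{α(p) : p ∈ Ass(I)}`. -/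
noncomputable def cNum {K : Type*} [Field K] {n : ℕ}
    (I : Ideal (MvPolynomial (Fin n) K)) : ℕ :=
  sSup (alphaNum '' Ass I)

namespace Stmt17Aux

open Finset

variable {K : Type*} [Field K] {n : ℕ}

/-- the exponent vector of the `i`-th edge of the cycle -/
noncomputable def ee [NeZero n] (i : Fin n) : Fin n →₀ ℕ :=
  Finsupp.single i 1 + Finsupp.single (i + 1) 1

/-- sum of the entries of `w` over a vertex set `V` -/
def vsum (V : Finset (Fin n)) (w : Fin n →₀ ℕ) : ℕ := ∑ v ∈ V, w v

lemma vsum_add (V : Finset (Fin n)) (w w' : Fin n →₀ ℕ) :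
    vsum V (w + w') = vsum V w + vsum V w' := by
  simp [vsum, Finset.sum_add_distrib]

lemma vsum_smul (V : Finset (Fin n)) (c : ℕ) (w : Fin n →₀ ℕ) :
    vsum V (c • w) = c * vsum V w := by
  simp [vsum, Finset.mul_sum]

lemma vsum_mono (V : Finset (Fin n)) {w w' : Fin n →₀ ℕ} (h : w ≤ w') :
    vsum V w ≤ vsum V w' :=
  Finset.sum_le_sum fun v _ => h v

lemma le_vsum (V : Finset (Fin n)) {v : Fin n} (hv : v ∈ V) (w : Fin n →₀ ℕ) :
    w v ≤ vsum V w :=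
  Finset.single_le_sum (f := fun v => w v) (fun _ _ => Nat.zero_le _) hv

lemma vsum_single (V : Finset (Fin n)) (j : Fin n) :
    vsum V (Finsupp.single j 1) = if j ∈ V then 1 else 0 := by
  simp [vsum, Finsupp.single_apply]

lemma degree_eq_vsum_univ (w : Fin n →₀ ℕ) : Finsupp.degree w = vsum univ w :=
  Finset.sum_subset (Finset.subset_univ _)
    (fun i _ h => Finsupp.notMem_support_iff.mp h)

lemma vsum_univ_ee [NeZero n] (i : Fin n) : vsum univ (ee i) = 2 := by
  simp [ee, vsum_add, vsum_single]

/-- the set of exponent vectors of products of `k` edges -/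
def Bk [NeZero n] (k : ℕ) : Set (Fin n →₀ ℕ) :=
  {w | ∃ l : Multiset (Fin n), Multiset.card l = k ∧ (l.map ee).sum = w}

lemma vsum_multiset [NeZero n] (V : Finset (Fin n)) (c : ℕ)
    (hc : ∀ i : Fin n, c ≤ vsum V (ee i)) (l : Multiset (Fin n)) :
    c * Multiset.card l ≤ vsum V ((l.map ee).sum) := by
  induction l using Multiset.induction_on with
  | empty => simp [vsum]
  | cons a l ih =>
      simp only [Multiset.map_cons, Multiset.sum_cons, Multiset.card_cons, vsum_add]
      calc c * (Multiset.card l + 1) = c + c * Multiset.card l := by ring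
      _ ≤ vsum V (ee a) + vsum V ((l.map ee).sum) := Nat.add_le_add (hc a) ih

lemma Bk_vsum [NeZero n] {V : Finset (Fin n)} {c k : ℕ}
    (hc : ∀ i : Fin n, c ≤ vsum V (ee i)) {w : Fin n →₀ ℕ} (hw : w ∈ Bk k) :
    c * k ≤ vsum V w := by
  obtain ⟨l, hl, rfl⟩ := hw
  simpa [hl] using vsum_multiset V c hc l


section Ideal

variable [NeZero n]

/-- conversion of the generator set in the theorem statement -/
lemma gens_eq (hn2 : 2 ≤ n) :
    ({f | ∃ (i : ℕ) (h : i + 1 < n),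
        f = (X (⟨i, by omega⟩ : Fin n) : MvPolynomial (Fin n) K) * X (⟨i + 1, h⟩ : Fin n)} ∪
      {(X (⟨n - 1, by omega⟩ : Fin n) : MvPolynomial (Fin n) K) * X (⟨0, by omega⟩ : Fin n)}) =
    (fun s => monomial s (1 : K)) '' Set.range (ee (n := n)) := by
  have hone : (1 : Fin n).val = 1 := by
    simp [Fin.val_one', Nat.mod_eq_of_lt hn2]
  have key : ∀ a : Fin n, (X a : MvPolynomial (Fin n) K) * X (a + 1) = monomial (ee a) 1 := by
    intro a
    rw [X, X, monomial_mul, ee, one_mul]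
  ext f
  constructor
  · rintro (⟨i, h, rfl⟩ | hf)
    · refine ⟨ee ⟨i, by omega⟩, ⟨⟨i, by omega⟩, rfl⟩, ?_⟩
      have h2 : (⟨i + 1, h⟩ : Fin n) = ⟨i, by omega⟩ + 1 := by
        ext
        simp [Fin.add_def, hone, Nat.mod_eq_of_lt h]
      show monomial (ee ⟨i, by omega⟩) (1 : K) = _
      rw [h2, key]
    · simp only [Set.mem_singleton_iff] at hf
      subst hf
      refine ⟨ee ⟨n - 1, by omega⟩, ⟨⟨n - 1, by omega⟩, rfl⟩, ?_⟩
      have h2 : (⟨0, by omega⟩ : Fin n) = (⟨n - 1, by omega⟩ : Fin n) + 1 := by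
        have hsucc : n - 1 + 1 = n := by omega
        ext
        simp [Fin.add_def, hone, hsucc]
      show monomial (ee ⟨n - 1, by omega⟩) (1 : K) = _
      rw [h2, key]
  · rintro ⟨s, ⟨a, rfl⟩, rfl⟩
    show (monomial (ee a) (1 : K)) ∈ _
    rcases lt_or_ge (a.val + 1) n with h | h
    · left
      refine ⟨a.val, h, ?_⟩
      have h2 : (⟨a.val + 1, h⟩ : Fin n) = a + 1 := by
        ext
        simp [Fin.add_def, hone, Nat.mod_eq_of_lt h]
      have h3 : (⟨a.val, by omega⟩ : Fin n) = a := Fin.eta a _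
      rw [h2, h3, key]
    · right
      have ha : a.val = n - 1 := by omega
      simp only [Set.mem_singleton_iff]
      have h2 : (⟨0, by omega⟩ : Fin n) = a + 1 := by
        have hsucc : n - 1 + 1 = n := by omega
        ext
        simp [Fin.add_def, hone, ha, hsucc]
      have h3 : (⟨n - 1, by omega⟩ : Fin n) = a := by ext; simp [ha]
      rw [h2, h3, key]

variable {I : Ideal (MvPolynomial (Fin n) K)}
variable (hIe : I = Ideal.span ((fun s => monomial s (1 : K)) '' Set.range (ee (n := n))))

include hIe in
lemma mono_mem (l : Multiset (Fin n)) :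
    monomial ((l.map ee).sum) (1 : K) ∈ I ^ Multiset.card l := by
  induction l using Multiset.induction_on with
  | empty => simp [Ideal.one_eq_top]
  | cons a l ih =>
      have ha : monomial (ee a) (1 : K) ∈ I := by
        rw [hIe]; exact Ideal.subset_span ⟨ee a, ⟨a, rfl⟩, rfl⟩
      have he : monomial (ee a + (l.map ee).sum) (1 : K)
          = monomial ((l.map ee).sum) 1 * monomial (ee a) 1 := by
        rw [monomial_mul, one_mul, add_comm]
      simp only [Multiset.map_cons, Multiset.sum_cons, Multiset.card_cons, he, pow_succ]
      exact Ideal.mul_mem_mul ih ha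

include hIe in
lemma pow_le (k : ℕ) :
    I ^ k ≤ Ideal.span ((fun s => monomial s (1 : K)) '' Bk k) := by
  induction k with
  | zero =>
      intro x _
      have h1 : (1 : MvPolynomial (Fin n) K) ∈
          Ideal.span ((fun s => monomial s (1 : K)) '' Bk 0) := by
        have := Ideal.subset_span (α := MvPolynomial (Fin n) K)
          (s := (fun s => monomial s (1 : K)) '' Bk 0)
          ⟨(0 : Fin n →₀ ℕ), ⟨(0 : Multiset (Fin n)), by simp, by simp⟩, rfl⟩
        simpa using this
      rw [(Ideal.eq_top_iff_one _).2 h1]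
      trivial
  | succ k ih =>
      rw [pow_succ]
      calc I ^ k * I
          ≤ Ideal.span ((fun s => monomial s (1 : K)) '' Bk k) *
            Ideal.span ((fun s => monomial s (1 : K)) '' Set.range ee) :=
            Ideal.mul_mono ih (le_of_eq hIe)
        _ ≤ Ideal.span ((fun s => monomial s (1 : K)) '' Bk (k + 1)) := by
            rw [Ideal.span_mul_span']
            apply Ideal.span_le.2
            rintro x ⟨y, ⟨w, ⟨l, hl, rfl⟩, rfl⟩, z, ⟨w', ⟨a, rfl⟩, rfl⟩, rfl⟩
            refine Ideal.subset_span
              ⟨(l.map ee).sum + ee a, ⟨a ::ₘ l, by simp [hl], by simp [add_comm]⟩, ?_⟩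
            simp [monomial_mul]

end Ideal


section Prime

variable [NeZero n]

/-- the ideal generated by the variables in `V` is prime -/
lemma spanX_prime (V : Finset (Fin n)) :
    (Ideal.span (X '' (V : Set (Fin n)) : Set (MvPolynomial (Fin n) K))).IsPrime := by
  set φ : MvPolynomial (Fin n) K →ₐ[K] MvPolynomial (Fin n) K :=
    aeval (fun j => if j ∈ V then 0 else X j) with hφ
  have hsub : ∀ g : MvPolynomial (Fin n) K,
      g - φ g ∈ Ideal.span (X '' (V : Set (Fin n)) : Set (MvPolynomial (Fin n) K)) := by
    intro g
    induction g using MvPolynomial.induction_on with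
    | C a => simp [hφ, aeval_C, algebraMap_eq]
    | add p q hp hq =>
        have : p + q - φ (p + q) = (p - φ p) + (q - φ q) := by
          rw [map_add]; ring
        rw [this]; exact Ideal.add_mem _ hp hq
    | mul_X p j hp =>
        rw [map_mul, aeval_X]
        by_cases hj : j ∈ V
        · rw [if_pos hj, mul_zero, sub_zero]
          exact Ideal.mul_mem_left _ p (Ideal.subset_span ⟨j, hj, rfl⟩)
        · rw [if_neg hj]
          have : p * X j - φ p * X j = (p - φ p) * X j := by ring
          rw [this]
          exact Ideal.mul_mem_right _ _ hp
  have hker : Ideal.span (X '' (V : Set (Fin n)) : Set (MvPolynomial (Fin n) K))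
      = RingHom.ker φ.toRingHom := by
    apply le_antisymm
    · rw [Ideal.span_le]
      rintro x ⟨j, hj, rfl⟩
      have hj' : j ∈ V := hj
      simp [RingHom.mem_ker, hφ, hj']
    · intro g hg
      rw [RingHom.mem_ker] at hg
      have h2 := hsub g
      rw [show φ.toRingHom g = φ g from rfl] at hg
      rwa [hg, sub_zero] at h2
  rw [hker]
  exact RingHom.ker_isPrime _

end Prime


section Main

variable [NeZero n] {I : Ideal (MvPolynomial (Fin n) K)}
variable (hIe : I = Ideal.span ((fun s => monomial s (1 : K)) '' Set.range (ee (n := n))))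

include hIe in
/-- the key computation of the colon ideal -/
lemma colon_eq {k c : ℕ} (V : Finset (Fin n)) (S : Fin n →₀ ℕ)
    (hc : ∀ i : Fin n, c ≤ vsum V (ee i))
    (hS : vsum V S < c * k)
    (hdec : ∀ j ∈ V, ∃ l : Multiset (Fin n),
      Multiset.card l = k ∧ (l.map ee).sum = Finsupp.single j 1 + S) :
    (I ^ k).colon (Ideal.span {monomial S (1 : K)}) =
      Ideal.span (X '' (V : Set (Fin n))) := by
  apply le_antisymm
  · intro g hg
    rw [Ideal.mem_colon_span_singleton] at hg
    rw [mem_ideal_span_X_image]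
    intro u hu
    by_contra hcon
    push_neg at hcon
    have hu2 : u + S ∈ (g * monomial S (1 : K)).support := by
      rw [mem_support_iff, coeff_mul_monomial, mul_one]
      exact mem_support_iff.mp hu
    have hmem := pow_le hIe k hg
    rw [mem_ideal_span_monomial_image] at hmem
    obtain ⟨w, hw, hle⟩ := hmem _ hu2
    have h1 : c * k ≤ vsum V w := Bk_vsum hc hw
    have h2 : vsum V w ≤ vsum V (u + S) := vsum_mono V hle
    have h3 : vsum V (u + S) = vsum V S := by
      rw [vsum_add]
      have : vsum V u = 0 := Finset.sum_eq_zero fun v hv => hcon v hv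
      omega
    omega
  · rw [Ideal.span_le]
    rintro x ⟨j, hj, rfl⟩
    have hj' : j ∈ V := hj
    obtain ⟨l, hl, hsum⟩ := hdec j hj'
    rw [SetLike.mem_coe, Ideal.mem_colon_span_singleton]
    have : (X j : MvPolynomial (Fin n) K) * monomial S 1
        = monomial (Finsupp.single j 1 + S) 1 := by
      rw [X, monomial_mul, one_mul]
    rw [this, ← hsum, ← hl]
    exact mono_mem hIe l

include hIe in
/-- every degree in the `vNumber` defining set is at least `2k - 1` -/
lemma lower_bound (hn3 : 3 ≤ n) {k d : ℕ} (hk : 1 ≤ k)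
    (f : MvPolynomial (Fin n) K) (p : Ideal (MvPolynomial (Fin n) K))
    (hass : p ∈ associatedPrimes (MvPolynomial (Fin n) K) (MvPolynomial (Fin n) K ⧸ I ^ k))
    (hd : f.IsHomogeneous d)
    (hcolon : (I ^ k).colon (Ideal.span {f}) = p) :
    2 * k - 1 ≤ d := by
  obtain ⟨hprime, x, hx⟩ := (isAssociatedPrime_iff).1 hass
  -- `I ^ k ≤ p`
  have hIp : I ^ k ≤ p := by
    intro r hr
    rw [hx, Submodule.mem_colon_singleton, Submodule.mem_bot]
    obtain ⟨y, rfl⟩ := Submodule.Quotient.mk_surjective _ x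
    rw [← Submodule.Quotient.mk_smul, Submodule.Quotient.mk_eq_zero]
    exact Ideal.mul_mem_right y _ hr
  -- some variable is in `p`
  have hedge : monomial (ee (0 : Fin n)) (1 : K) ∈ I := by
    rw [hIe]; exact Ideal.subset_span ⟨ee 0, ⟨0, rfl⟩, rfl⟩
  have hXX : (X (0 : Fin n) : MvPolynomial (Fin n) K) * X ((0 : Fin n) + 1) ∈ p := by
    have h1 : ((X (0 : Fin n) : MvPolynomial (Fin n) K) * X ((0 : Fin n) + 1)) ^ k ∈ I ^ k := by
      apply Ideal.pow_mem_pow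
      rw [X, X, monomial_mul, one_mul]
      exact hedge
    exact hprime.mem_of_pow_mem k (hIp h1)
  have hvar : ∃ a : Fin n, X a ∈ p := by
    rcases hprime.mem_or_mem hXX with h | h
    exacts [⟨_, h⟩, ⟨_, h⟩]
  obtain ⟨a, ha⟩ := hvar
  -- `f ≠ 0`
  have hf0 : f ≠ 0 := by
    rintro rfl
    have : (I ^ k).colon (Ideal.span {(0 : MvPolynomial (Fin n) K)}) = ⊤ := by
      rw [eq_top_iff]
      intro r _
      rw [Ideal.mem_colon_span_singleton, mul_zero]
      exact Ideal.zero_mem _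
    rw [this] at hcolon
    exact hprime.ne_top hcolon.symm
  obtain ⟨u, hu⟩ := (MvPolynomial.support_nonempty.2 hf0)
  -- `f * X a ∈ I ^ k`
  have hfa : f * X a ∈ I ^ k := by
    rw [← hcolon, Ideal.mem_colon_span_singleton] at ha
    rwa [mul_comm] at ha
  have hu2 : u + Finsupp.single a 1 ∈ (f * X a).support := by
    rw [mem_support_iff, coeff_mul_X]
    exact mem_support_iff.mp hu
  have hmem := pow_le hIe k hfa
  rw [mem_ideal_span_monomial_image] at hmem
  obtain ⟨w, hw, hle⟩ := hmem _ hu2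
  have h1 : 2 * k ≤ vsum univ w :=
    Bk_vsum (fun i => le_of_eq (vsum_univ_ee i).symm) hw
  have h2 : vsum univ w ≤ vsum univ (u + Finsupp.single a 1) := vsum_mono _ hle
  have h3 : vsum univ (u + Finsupp.single a 1) = d + 1 := by
    rw [vsum_add, vsum_single]
    have hdu : Finsupp.degree u = d := by
      have := hd (mem_support_iff.mp hu)
      rw [Finsupp.degree_eq_weight_one]; exact this
    rw [degree_eq_vsum_univ] at hdu
    simp [hdu]
  omega

end Main


section Upper

variable [NeZero n] {I : Ideal (MvPolynomial (Fin n) K)}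

lemma ass_mem {k : ℕ} {S : Fin n →₀ ℕ} {V : Finset (Fin n)}
    (hcolon : (I ^ k).colon (Ideal.span {monomial S (1 : K)}) =
      Ideal.span (X '' (V : Set (Fin n)))) :
    Ideal.span (X '' (V : Set (Fin n))) ∈
      associatedPrimes (MvPolynomial (Fin n) K) (MvPolynomial (Fin n) K ⧸ I ^ k) := by
  refine (isAssociatedPrime_iff).2 ⟨spanX_prime V, Submodule.Quotient.mk (monomial S (1 : K)), ?_⟩
  ext r
  rw [Submodule.mem_colon_singleton, Submodule.mem_bot, ← Submodule.Quotient.mk_smul,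
    Submodule.Quotient.mk_eq_zero, smul_eq_mul, ← Ideal.mem_colon_span_singleton, hcolon]

end Upper

section Sums

lemma vsum_sum {α : Type*} (V : Finset (Fin n)) (F : Finset α) (w : α → (Fin n →₀ ℕ)) :
    vsum V (∑ i ∈ F, w i) = ∑ i ∈ F, vsum V (w i) := by
  unfold vsum
  rw [Finset.sum_comm]
  congr 1
  ext v
  rw [Finsupp.finset_sum_apply]

lemma pair_sum {M : Type*} [AddCommMonoid M] (h : ℕ → M) (m' : ℕ) :
    ∑ t ∈ range (2 * m'), h t = ∑ s ∈ range m', (h (2 * s) + h (2 * s + 1)) := by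
  induction m' with
  | zero => simp
  | succ m' ih =>
      rw [show 2 * (m' + 1) = 2 * m' + 1 + 1 by ring, sum_range_succ, sum_range_succ,
        sum_range_succ, ih, add_assoc]

lemma msum_range {M : Type*} [AddCommMonoid M] (f : ℕ → M) (m' : ℕ) :
    ((Multiset.range m').map f).sum = ∑ s ∈ range m', f s := by
  rw [Finset.sum, Finset.range_val]

end Sums


open Fin.NatCast

section Witness

variable {m : ℕ}

lemma ee_cast [NeZero n] (t : ℕ) :
    ee ((t : Fin n)) = Finsupp.single ((t : Fin n)) 1 + Finsupp.single (((t + 1 : ℕ) : Fin n)) 1 := by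
  rw [ee]
  congr 2
  push_cast
  ring

lemma rotation {m : ℕ} (j : Fin (2 * m + 1)) :
    (∑ s ∈ range m, ee (j + ((2 * s : ℕ) : Fin (2 * m + 1))))
        + ee (j + ((2 * m : ℕ) : Fin (2 * m + 1)))
      = Finsupp.single j 1 + ∑ i : Fin (2 * m + 1), Finsupp.single i 1 := by
  set g : ℕ → (Fin (2 * m + 1) →₀ ℕ) := fun t => Finsupp.single (j + (t : Fin (2 * m + 1))) 1
    with hgdef
  have hg : ∀ t : ℕ, ee (j + (t : Fin (2 * m + 1))) = g (t) + g (t + 1) := by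
    intro t
    rw [ee, hgdef]
    congr 2
    push_cast
    rw [add_assoc]
  have h2 : ∑ s ∈ range m, ee (j + ((2 * s : ℕ) : Fin (2 * m + 1)))
      = ∑ t ∈ range (2 * m), g t := by
    rw [pair_sum]
    exact Finset.sum_congr rfl fun s _ => hg (2 * s)
  have h4 : g (2 * m + 1) = Finsupp.single j 1 := by
    rw [hgdef]
    simp only
    rw [Fin.natCast_self, add_zero]
  have h6 : ∑ t ∈ range (2 * m + 1), g t = ∑ i : Fin (2 * m + 1), Finsupp.single i 1 := by
    rw [← Fin.sum_univ_eq_sum_range (fun t => g t) (2 * m + 1)]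
    have : ∀ i : Fin (2 * m + 1), g i.val = Finsupp.single (j + i) 1 := by
      intro i; rw [hgdef]; simp only [Fin.cast_val_eq_self]
    rw [Finset.sum_congr rfl (fun i _ => this i)]
    exact Fintype.sum_equiv (Equiv.addLeft j) _ _ (fun _ => rfl)
  calc (∑ s ∈ range m, ee (j + ((2 * s : ℕ) : Fin (2 * m + 1))))
        + ee (j + ((2 * m : ℕ) : Fin (2 * m + 1)))
      = ∑ t ∈ range (2 * m), g t + (g (2 * m) + g (2 * m + 1)) := by rw [h2, hg]
    _ = (∑ t ∈ range (2 * m + 1), g t) + g (2 * m + 1) := by rw [sum_range_succ]; abel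
    _ = Finsupp.single j 1 + ∑ i : Fin (2 * m + 1), Finsupp.single i 1 := by rw [h6, h4]; abel

lemma witnessA {m : ℕ} (hm : 1 ≤ m) (k : ℕ) (hk : m + 1 ≤ k) :
    ∃ (c : ℕ) (V : Finset (Fin (2 * m + 1))) (S : Fin (2 * m + 1) →₀ ℕ),
      (∀ i : Fin (2 * m + 1), c ≤ vsum V (ee i)) ∧ vsum V S < c * k ∧
      (∀ j ∈ V, ∃ l : Multiset (Fin (2 * m + 1)),
        Multiset.card l = k ∧ (l.map ee).sum = Finsupp.single j 1 + S) ∧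
      Finsupp.degree S = 2 * k - 1 := by
  refine ⟨2, Finset.univ, (∑ i : Fin (2 * m + 1), Finsupp.single i 1) + (k - m - 1) • ee 0, ?_, ?_, ?_, ?_⟩
  · intro i; rw [vsum_univ_ee]
  · have h1 : vsum univ ((∑ i : Fin (2 * m + 1), Finsupp.single i 1) + (k - m - 1) • ee 0)
        = (2 * m + 1) + (k - m - 1) * 2 := by
      rw [vsum_add, vsum_smul, vsum_univ_ee, vsum_sum]
      have : ∀ i : Fin (2 * m + 1), vsum univ (Finsupp.single i 1) = 1 := by
        intro i; rw [vsum_single, if_pos (mem_univ i)]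
      rw [Finset.sum_congr rfl (fun i _ => this i)]
      simp
    rw [h1]; omega
  · intro j _
    refine ⟨(j + ((2 * m : ℕ) : Fin (2 * m + 1))) ::ₘ ((Multiset.range m).map
      (fun s => j + ((2 * s : ℕ) : Fin (2 * m + 1))) + Multiset.replicate (k - m - 1) (0 : Fin (2 * m + 1))), ?_, ?_⟩
    · simp only [Multiset.card_cons, Multiset.card_add, Multiset.card_map,
        Multiset.card_range, Multiset.card_replicate]
      omega
    · simp only [Multiset.map_cons, Multiset.sum_cons, Multiset.map_add, Multiset.sum_add,
        Multiset.map_map, Function.comp, Multiset.map_replicate, Multiset.sum_replicate]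
      rw [msum_range (fun s => ee (j + ((2 * s : ℕ) : Fin (2 * m + 1)))) m]
      have := rotation j
      rw [show (0 : Fin (2 * m + 1)) = ((0 :ℕ) : Fin (2 * m + 1)) by simp] at *
      calc ee (j + ((2*m : ℕ) : Fin (2 * m + 1))) + (∑ s ∈ range m, ee (j + ((2 * s : ℕ) : Fin (2 * m + 1)))
            + (k - m - 1) • ee (((0:ℕ) : Fin (2 * m + 1))))
          = ((∑ s ∈ range m, ee (j + ((2 * s : ℕ) : Fin (2 * m + 1)))) + ee (j + ((2*m : ℕ) : Fin (2 * m + 1))))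
            + (k - m - 1) • ee (((0:ℕ) : Fin (2 * m + 1))) := by abel
        _ = _ := by rw [this]; abel
  · rw [degree_eq_vsum_univ, vsum_add, vsum_smul, vsum_univ_ee, vsum_sum]
    have : ∀ i : Fin (2 * m + 1), vsum univ (Finsupp.single i 1) = 1 := by
      intro i; rw [vsum_single, if_pos (mem_univ i)]
    rw [Finset.sum_congr rfl (fun i _ => this i)]
    simp
    omega

end Witness


section WitnessB

variable {m : ℕ}

lemma val_cast_of_lt' {t : ℕ} (ht : t < 2 * m + 1) : ((t : Fin (2 * m + 1))).val = t := by
  rw [Fin.val_natCast]; exact Nat.mod_eq_of_lt ht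

lemma cast_inj_of_lt {t t' : ℕ} (ht : t < 2 * m + 1) (ht' : t' < 2 * m + 1) :
    ((t : Fin (2 * m + 1))) = ((t' : Fin (2 * m + 1))) ↔ t = t' := by
  constructor
  · intro h
    have := congrArg Fin.val h
    rwa [val_cast_of_lt' ht, val_cast_of_lt' ht'] at this
  · rintro rfl; rfl

/-- the exponent vector of the witness monomial for `k = m` -/
noncomputable def SB (m : ℕ) : Fin (2 * m + 1) →₀ ℕ :=
  ∑ t ∈ range (2 * m - 1), Finsupp.single ((t : Fin (2 * m + 1))) 1

/-- the vertex cover for `k = m` -/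
def VB (m : ℕ) : Finset (Fin (2 * m + 1)) :=
  ((range (m - 1)).image fun s => ((2 * s + 1 : ℕ) : Fin (2 * m + 1))) ∪
    {((2 * m - 1 : ℕ) : Fin (2 * m + 1)), ((2 * m : ℕ) : Fin (2 * m + 1))}

lemma SB_apply (hm : 1 ≤ m) {t' : ℕ} (ht' : t' < 2 * m + 1) :
    SB m ((t' : Fin (2 * m + 1))) = if t' < 2 * m - 1 then 1 else 0 := by
  rw [SB, Finsupp.finset_sum_apply]
  have h1 : ∀ t ∈ range (2 * m - 1),
      (Finsupp.single ((t : Fin (2 * m + 1))) 1) ((t' : Fin (2 * m + 1))) = if t = t' then 1 else 0 := by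
    intro t ht
    rw [Finsupp.single_apply]
    congr 1
    rw [eq_iff_iff]
    exact cast_inj_of_lt (by simp at ht; omega) ht'
  rw [Finset.sum_congr rfl h1, Finset.sum_ite_eq' (range (2 * m - 1)) t' (fun _ => 1)]
  simp only [Finset.mem_range]

lemma SB_le_one (hm : 1 ≤ m) (v : Fin (2 * m + 1)) : SB m v ≤ 1 := by
  have := SB_apply (m := m) hm (t' := v.val) v.isLt
  rw [Fin.cast_val_eq_self] at this
  rw [this]
  split <;> omega

lemma cover_B (hm : 1 ≤ m) (i : Fin (2 * m + 1)) : i ∈ VB m ∨ i + 1 ∈ VB m := by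
  have hmem_pair1 : ((2 * m - 1 : ℕ) : Fin (2 * m + 1)) ∈ VB m := by
    apply Finset.mem_union_right
    exact Finset.mem_insert_self _ _
  have hmem_pair2 : ((2 * m : ℕ) : Fin (2 * m + 1)) ∈ VB m := by
    apply Finset.mem_union_right
    exact Finset.mem_insert_of_mem (Finset.mem_singleton_self _)
  have hmem_im : ∀ s : ℕ, s < m - 1 → ((2 * s + 1 : ℕ) : Fin (2 * m + 1)) ∈ VB m := by
    intro s hs
    apply Finset.mem_union_left
    exact Finset.mem_image.2 ⟨s, Finset.mem_range.2 hs, rfl⟩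
  have hi : ((i.val : ℕ) : Fin (2 * m + 1)) = i := Fin.cast_val_eq_self i
  have hsucc : i + 1 = (((i.val + 1 : ℕ)) : Fin (2 * m + 1)) := by
    rw [Nat.cast_add, Nat.cast_one, hi]
  rcases Nat.lt_or_ge i.val (2 * m - 1) with hlt | hge
  · rcases Nat.even_or_odd i.val with ⟨s, hs⟩ | ⟨s, hs⟩
    · -- even: use i + 1
      right
      rw [hsucc]
      rcases Nat.lt_or_ge (i.val + 1) (2 * m - 1) with h2 | h2
      · have hs' : i.val + 1 = 2 * s + 1 := by omega
        rw [hs']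
        exact hmem_im s (by omega)
      · have hs' : i.val + 1 = 2 * m - 1 := by omega
        rw [hs']
        exact hmem_pair1
    · -- odd
      left
      rw [← hi, show i.val = 2 * s + 1 by omega]
      exact hmem_im s (by omega)
  · have hv : i.val = 2 * m - 1 ∨ i.val = 2 * m := by have := i.isLt; omega
    left
    rcases hv with h | h <;> rw [← hi, h]
    exacts [hmem_pair1, hmem_pair2]

lemma hc_B (hm : 1 ≤ m) (i : Fin (2 * m + 1)) : 1 ≤ vsum (VB m) (ee i) := by
  have h1 : 1 ≤ ee i i := by
    rw [ee, Finsupp.add_apply, Finsupp.single_apply, if_pos rfl]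
    omega
  have h2 : 1 ≤ ee i (i + 1) := by
    rw [ee, Finsupp.add_apply]
    have : (Finsupp.single (i+1) 1) (i+1) = 1 := by rw [Finsupp.single_apply, if_pos rfl]
    omega
  rcases cover_B hm i with hv | hv
  · exact le_trans h1 (le_vsum _ hv _)
  · exact le_trans h2 (le_vsum _ hv _)

lemma hS_B (hm : 1 ≤ m) : vsum (VB m) (SB m) < 1 * m := by
  have hsplit : vsum (VB m) (SB m) ≤
      vsum ((range (m - 1)).image fun s => ((2 * s + 1 : ℕ) : Fin (2 * m + 1))) (SB m) +
      vsum ({((2 * m - 1 : ℕ) : Fin (2 * m + 1)), ((2 * m : ℕ) : Fin (2 * m + 1))} : Finset (Fin (2 * m + 1))) (SB m) := by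
    unfold vsum VB
    have := Finset.sum_union_inter (s₁ := (range (m - 1)).image fun s => ((2 * s + 1 : ℕ) : Fin (2 * m + 1)))
      (s₂ := ({((2 * m - 1 : ℕ) : Fin (2 * m + 1)), ((2 * m : ℕ) : Fin (2 * m + 1))} : Finset (Fin (2 * m + 1))))
      (f := fun v => SB m v)
    omega
  have h1 : vsum ((range (m - 1)).image fun s => ((2 * s + 1 : ℕ) : Fin (2 * m + 1))) (SB m) ≤ m - 1 := by
    calc vsum _ (SB m) ≤ ((range (m - 1)).image fun s => ((2 * s + 1 : ℕ) : Fin (2 * m + 1))).card * 1 := by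
          unfold vsum
          apply Finset.sum_le_card_nsmul
          intro v _
          exact SB_le_one hm v
      _ ≤ (m - 1) * 1 := by
          apply Nat.mul_le_mul_right
          exact le_trans (Finset.card_image_le) (by rw [Finset.card_range])
      _ = m - 1 := by omega
  have h2 : vsum ({((2 * m - 1 : ℕ) : Fin (2 * m + 1)), ((2 * m : ℕ) : Fin (2 * m + 1))} : Finset (Fin (2 * m + 1))) (SB m)
      = 0 := by
    unfold vsum
    apply Finset.sum_eq_zero
    intro v hv
    rcases Finset.mem_insert.1 hv with h | h
    · rw [h, SB_apply hm (by omega)]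
      simp
    · rw [Finset.mem_singleton.1 h, SB_apply hm (by omega)]
      simp
  omega

lemma deg_SB (hm : 1 ≤ m) : Finsupp.degree (SB m) = 2 * m - 1 := by
  rw [degree_eq_vsum_univ, SB, vsum_sum]
  have : ∀ t ∈ range (2 * m - 1), vsum univ (Finsupp.single ((t : Fin (2 * m + 1))) 1) = 1 := by
    intro t _
    rw [vsum_single, if_pos (mem_univ _)]
  rw [Finset.sum_congr rfl this]
  simp

end WitnessB


section WitnessB2

variable {m : ℕ}

lemma hdec_B (hm : 1 ≤ m) :
    ∀ j ∈ VB m, ∃ l : Multiset (Fin (2 * m + 1)),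
      Multiset.card l = m ∧ (l.map ee).sum = Finsupp.single j 1 + SB m := by
  set sg : ℕ → (Fin (2 * m + 1) →₀ ℕ) :=
    fun t => Finsupp.single ((t : Fin (2 * m + 1))) 1 with hsg
  have hEE : ∀ t : ℕ, ee ((t : Fin (2 * m + 1))) = sg t + sg (t + 1) := fun t => ee_cast t
  have hSB : SB m = ∑ t ∈ range (2 * m - 1), sg t := rfl
  intro j hj
  rcases Finset.mem_union.1 hj with him | hpair
  · -- j = cast (2 s₀ + 1), s₀ < m - 1
    obtain ⟨s₀, hs₀, rfl⟩ := Finset.mem_image.1 him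
    rw [Finset.mem_range] at hs₀
    refine ⟨(Multiset.range (s₀ + 1)).map (fun s => ((2 * s : ℕ) : Fin (2 * m + 1))) +
      (((2 * s₀ + 1 : ℕ) : Fin (2 * m + 1)) ::ₘ
        (Multiset.range (m - s₀ - 2)).map (fun s => ((2 * s₀ + 3 + 2 * s : ℕ) : Fin (2 * m + 1)))),
      ?_, ?_⟩
    · simp only [Multiset.card_add, Multiset.card_map, Multiset.card_range, Multiset.card_cons]
      omega
    · rw [Multiset.map_add, Multiset.sum_add, Multiset.map_map, Multiset.map_cons,
        Multiset.sum_cons, Multiset.map_map]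
      simp only [Function.comp_def]
      rw [msum_range (fun s => ee ((2 * s : ℕ) : Fin (2 * m + 1))) (s₀ + 1),
        msum_range (fun s => ee ((2 * s₀ + 3 + 2 * s : ℕ) : Fin (2 * m + 1))) (m - s₀ - 2)]
      have hA : ∑ s ∈ range (s₀ + 1), ee ((2 * s : ℕ) : Fin (2 * m + 1))
          = ∑ t ∈ range (2 * s₀ + 2), sg t := by
        rw [show 2 * s₀ + 2 = 2 * (s₀ + 1) by ring, pair_sum sg (s₀ + 1)]
        exact Finset.sum_congr rfl fun s _ => hEE (2 * s)
      have hC : ∑ s ∈ range (m - s₀ - 2), ee ((2 * s₀ + 3 + 2 * s : ℕ) : Fin (2 * m + 1))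
          = ∑ t ∈ range (2 * (m - s₀ - 2)), sg (2 * s₀ + 3 + t) := by
        rw [pair_sum (fun t => sg (2 * s₀ + 3 + t)) (m - s₀ - 2)]
        apply Finset.sum_congr rfl
        intro s _
        rw [hEE (2 * s₀ + 3 + 2 * s), show 2 * s₀ + 3 + 2 * s + 1 = 2 * s₀ + 3 + (2 * s + 1) by omega]
      have hD : ∑ t ∈ range (2 * m - 1), sg t
          = (∑ t ∈ range (2 * s₀ + 2), sg t + sg (2 * s₀ + 2))
            + ∑ t ∈ range (2 * (m - s₀ - 2)), sg (2 * s₀ + 3 + t) := by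
        rw [show 2 * m - 1 = 2 * s₀ + 3 + 2 * (m - s₀ - 2) by omega,
          Finset.sum_range_add sg (2 * s₀ + 3) (2 * (m - s₀ - 2)),
          show 2 * s₀ + 3 = 2 * s₀ + 2 + 1 by omega, sum_range_succ]
      rw [hA, hC, hEE (2 * s₀ + 1), hSB, hD,
        show 2 * s₀ + 1 + 1 = 2 * s₀ + 2 by omega]
      abel
  · rcases Finset.mem_insert.1 hpair with rfl | hsing
    · -- j = cast (2m - 1)
      refine ⟨(Multiset.range m).map (fun s => ((2 * s : ℕ) : Fin (2 * m + 1))), ?_, ?_⟩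
      · simp
      · rw [Multiset.map_map]
        simp only [Function.comp_def]
        rw [msum_range (fun s => ee ((2 * s : ℕ) : Fin (2 * m + 1))) m]
        calc ∑ s ∈ range m, ee ((2 * s : ℕ) : Fin (2 * m + 1))
            = ∑ s ∈ range m, (sg (2 * s) + sg (2 * s + 1)) :=
              Finset.sum_congr rfl fun s _ => hEE (2 * s)
          _ = ∑ t ∈ range (2 * m), sg t := (pair_sum sg m).symm
          _ = ∑ t ∈ range (2 * m - 1), sg t + sg (2 * m - 1) := by
              have h := Finset.sum_range_succ sg (2 * m - 1)
              rw [show 2 * m - 1 + 1 = 2 * m by omega] at h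
              exact h
          _ = _ := by rw [hSB]; abel
    · -- j = cast (2m)
      rw [Finset.mem_singleton] at hsing
      subst hsing
      refine ⟨((2 * m : ℕ) : Fin (2 * m + 1)) ::ₘ
        (Multiset.range (m - 1)).map (fun s => ((2 * s + 1 : ℕ) : Fin (2 * m + 1))), ?_, ?_⟩
      · simp; omega
      · rw [Multiset.map_cons, Multiset.sum_cons, Multiset.map_map]
        simp only [Function.comp_def]
        rw [msum_range (fun s => ee ((2 * s + 1 : ℕ) : Fin (2 * m + 1))) (m - 1)]
        have hmid : ∑ s ∈ range (m - 1), ee ((2 * s + 1 : ℕ) : Fin (2 * m + 1))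
            = ∑ t ∈ range (2 * (m - 1)), sg (t + 1) := by
          rw [pair_sum (fun t => sg (t + 1)) (m - 1)]
          apply Finset.sum_congr rfl
          intro s _
          rw [hEE (2 * s + 1)]
        have hzero : sg (2 * m + 1) = sg 0 := by
          rw [hsg]
          simp only [Fin.natCast_self, Nat.cast_zero]
        have hglue : ∑ t ∈ range (2 * (m - 1)), sg (t + 1) + sg 0
            = ∑ t ∈ range (2 * m - 1), sg t := by
          rw [show 2 * m - 1 = 2 * (m - 1) + 1 by omega, Finset.sum_range_succ' sg (2 * (m - 1))]
        rw [hmid, hEE (2 * m), hzero, hSB, ← hglue]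
        abel

lemma witnessB (hm : 1 ≤ m) :
    ∃ (c : ℕ) (V : Finset (Fin (2 * m + 1))) (S : Fin (2 * m + 1) →₀ ℕ),
      (∀ i : Fin (2 * m + 1), c ≤ vsum V (ee i)) ∧ vsum V S < c * m ∧
      (∀ j ∈ V, ∃ l : Multiset (Fin (2 * m + 1)),
        Multiset.card l = m ∧ (l.map ee).sum = Finsupp.single j 1 + S) ∧
      Finsupp.degree S = 2 * m - 1 :=
  ⟨1, VB m, SB m, hc_B hm, hS_B hm, hdec_B hm, deg_SB hm⟩

end WitnessB2

end Stmt17Aux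


/-- For an odd `n = 2m + 1 ≥ 3`, the edge ideal
`I = ⟨x_1x_2, …, x_{n−1}x_n, x_nx_1⟩` of the odd cycle `C_n` satisfies
`v(I^k) = 2k − 1` for all `k ≥ m = ⌊n/2⌋`. -/
theorem stmt17 {K : Type*} [Field K] {n m : ℕ} (hm : 1 ≤ m) (hn : n = 2 * m + 1)
    (I : Ideal (MvPolynomial (Fin n) K))
    (hI : I = Ideal.span ({f | ∃ (i : ℕ) (h : i + 1 < n),
        f = (X (⟨i, by omega⟩ : Fin n) : MvPolynomial (Fin n) K) * X (⟨i + 1, h⟩ : Fin n)} ∪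
      {(X (⟨n - 1, by omega⟩ : Fin n) : MvPolynomial (Fin n) K) * X (⟨0, by omega⟩ : Fin n)})) :
    ∀ k : ℕ, m ≤ k → (vNumber (I ^ k) : ℤ) = 2 * k - 1 := by
  intro k hk
  haveI : NeZero n := ⟨by omega⟩
  subst hn
  have hIe : I = Ideal.span ((fun s => monomial s (1 : K)) '' Set.range Stmt17Aux.ee) := by
    rw [hI, Stmt17Aux.gens_eq (by omega)]
  obtain ⟨c, V, S, hc, hS, hdec, hdeg⟩ :
      ∃ (c : ℕ) (V : Finset (Fin (2 * m + 1))) (S : Fin (2 * m + 1) →₀ ℕ),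
        (∀ i : Fin (2 * m + 1), c ≤ Stmt17Aux.vsum V (Stmt17Aux.ee i)) ∧
        Stmt17Aux.vsum V S < c * k ∧
        (∀ j ∈ V, ∃ l : Multiset (Fin (2 * m + 1)),
          Multiset.card l = k ∧ (l.map Stmt17Aux.ee).sum = Finsupp.single j 1 + S) ∧
        Finsupp.degree S = 2 * k - 1 := by
    rcases eq_or_lt_of_le hk with rfl | hlt
    · exact Stmt17Aux.witnessB hm
    · exact Stmt17Aux.witnessA hm k hlt
  have hcolon := Stmt17Aux.colon_eq hIe V S hc hS hdec
  have hass := Stmt17Aux.ass_mem hcolon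
  have hmem : (2 * k - 1) ∈ {d | ∃ f : MvPolynomial (Fin (2 * m + 1)) K,
      ∃ p ∈ Ass (I ^ k), f.IsHomogeneous d ∧ (I ^ k).colon (Ideal.span {f}) = p} :=
    ⟨monomial S 1, Ideal.span (X '' (V : Set (Fin (2 * m + 1)))), hass,
      isHomogeneous_monomial 1 hdeg, hcolon⟩
  have hlow : ∀ d ∈ {d | ∃ f : MvPolynomial (Fin (2 * m + 1)) K,
      ∃ p ∈ Ass (I ^ k), f.IsHomogeneous d ∧ (I ^ k).colon (Ideal.span {f}) = p},
      2 * k - 1 ≤ d := by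
    rintro d ⟨f, p, hp, hhom, hcol⟩
    exact Stmt17Aux.lower_bound hIe (by omega) (by omega) f p hp hhom hcol
  have hv : vNumber (I ^ k) = 2 * k - 1 :=
    le_antisymm (Nat.sInf_le hmem) (le_csInf ⟨_, hmem⟩ hlow)
  rw [hv]
  omega
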